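/- arXiv:1812.00139 — 2 statements merged into one kernel-verified Lean document; each statement's English description precedes it below -/
import Mathlib

section
/- For any α ∈ (0,1) and m ≥ 2, there exists b ∈ ℝ^m such that the polynomial f_b(x) = 1 - Π_{i=1}^m (1 - b_i x) satisfies max_{x∈[α,1]} |1 - f_b(x)| ≤ ((1-α)/(1+α))^m and f_b(0) = 0. -/
/-- For any `α ∈ (0,1)` and `m ≥ 2` there exists `b ∈ ℝ^m` such that the polynomial
`f_b(x) = 1 - Π_i (1 - b_i x)` approximates the constant `1` on `[α,1]` within
`((1-α)/(1+α))^m`, and `f_b(0) = 0`. -/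
theorem exists_good_poly (α : ℝ) (hα0 : 0 < α) (hα1 : α < 1) (m : ℕ) (hm : 2 ≤ m) :
    ∃ b : Fin m → ℝ,
      (∀ x ∈ Set.Icc α (1 : ℝ),
        |1 - (1 - ∏ i, (1 - b i * x))| ≤ ((1 - α) / (1 + α)) ^ m) ∧
      (1 - ∏ i, (1 - b i * (0 : ℝ))) = 0 := by
  have h1α : (0:ℝ) < 1 + α := by linarith
  refine ⟨fun _ => 2 / (1 + α), ?_, by simp⟩
  intro x hx
  obtain ⟨hx1, hx2⟩ := hx
  have key : |1 - 2 / (1 + α) * x| ≤ (1 - α) / (1 + α) := by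
    have h2 : 1 - 2 / (1 + α) * x = (1 + α - 2 * x) / (1 + α) := by
      field_simp
    rw [h2, abs_div, abs_of_pos h1α]
    gcongr
    rw [abs_le]; constructor <;> linarith

  calc |1 - (1 - ∏ i : Fin m, (1 - 2 / (1 + α) * x))|
      = |1 - 2 / (1 + α) * x| ^ m := by
        rw [Finset.prod_const, Finset.card_univ, Fintype.card_fin]; ring_nf
        rw [abs_pow]
    _ ≤ ((1 - α) / (1 + α)) ^ m := pow_le_pow_left₀ (abs_nonneg _) key m
end

section
/- Suppose the estimator ĉc = N − Σ_{k=1}^m (a_k/β^k)·Θ̂_k satisfies E[Θ̂_k] = ‖L‖_k^k for each k, where a_k are the coefficients of a polynomial f with f(x) = Σ_k a_k x^k satisfying f(0) = 0 and max_{x∈[α,1]} |1 − f(x)| ≤ γ^m with γ = (1−α)/(1+α). If all nonzero eigenvalues of L/β lie in [α,1] and G has cc(G) zero eigenvalues, then |cc(G) − E[ĉc]| ≤ (N − cc(G))·γ^m. -/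
open Finset

/-!
Write `f x = ∑_{k=1}^m a_k x^k`. Since `Θ_k / β^k` is the `k`-th power sum of the eigenvalues
`σ_i` of `L/β`, the estimate equals `N - ∑_i f(σ_i)`. As `f 0 = 0`, only the `N - cc` nonzero
eigenvalues contribute, so the bias is `∑_{σ_i ≠ 0} (f(σ_i) - 1)`, and each of these terms is
at most `γ^m` in absolute value because `σ_i ∈ [α, 1]`.
-/

lemma sum_div_pow_mul_sum_mul_pow {ι K : Type*} [Fintype ι] [Field K] (s : Finset ℕ)
    (a : ℕ → K) {β : K} (hβ : β ≠ 0) (σ : ι → K) :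
    ∑ k ∈ s, a k / β ^ k * ∑ i, (β * σ i) ^ k = ∑ i, ∑ k ∈ s, a k * σ i ^ k := by
  simp only [Finset.mul_sum]
  rw [Finset.sum_comm]
  refine Finset.sum_congr rfl fun i _ => Finset.sum_congr rfl fun k _ => ?_
  rw [mul_pow]
  field_simp

lemma sum_Icc_one_mul_zero_pow {R : Type*} [Semiring R] (m : ℕ) (a : ℕ → R) :
    ∑ k ∈ Icc 1 m, a k * 0 ^ k = 0 :=
  Finset.sum_eq_zero fun k hk => by
    rw [zero_pow (Nat.one_le_iff_ne_zero.mp (mem_Icc.mp hk).1), mul_zero]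

lemma abs_card_zero_sub_le {ι : Type*} [Fintype ι] (σ : ι → ℝ) {f : ℝ → ℝ} (hf0 : f 0 = 0)
    {ε : ℝ} (hf : ∀ i, σ i ≠ 0 → |1 - f (σ i)| ≤ ε) :
    |(Fintype.card {i // σ i = 0} : ℝ) - (Fintype.card ι - ∑ i, f (σ i))|
      ≤ (Fintype.card ι - Fintype.card {i // σ i = 0}) * ε := by
  set S := univ.filter fun i => σ i ≠ 0
  have hcard : (Fintype.card ι : ℝ) - Fintype.card {i // σ i = 0} = #S := by
    rw [sub_eq_iff_eq_add, Fintype.card_subtype, ← Nat.cast_add, add_comm,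
      card_filter_add_card_filter_not, card_univ]
  have hsum : ∑ i, f (σ i) = ∑ i ∈ S, f (σ i) :=
    (sum_filter_of_ne (p := fun i => σ i ≠ 0) fun i _ hi hzero =>
      hi (by rw [hzero, hf0])).symm
  have hbias : (Fintype.card {i // σ i = 0} : ℝ) - (Fintype.card ι - ∑ i, f (σ i))
      = ∑ i ∈ S, (f (σ i) - 1) := by
    rw [sum_sub_distrib, ← hsum, sum_const, nsmul_one, ← hcard]
    ring
  rw [hbias, hcard]
  calc |∑ i ∈ S, (f (σ i) - 1)| ≤ ∑ i ∈ S, |f (σ i) - 1| := abs_sum_le_sum_abs _ _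
    _ ≤ #S * ε := by
      rw [← nsmul_eq_mul]
      refine sum_le_card_nsmul _ _ _ fun i hi => ?_
      rw [abs_sub_comm]
      exact hf i (mem_filter.mp hi).2

theorem bias_bound_general (N m : ℕ) (α β γ : ℝ) (hβ : 0 < β)
    (σ : Fin N → ℝ) (hσ : ∀ i, σ i ≠ 0 → σ i ∈ Set.Icc α 1)
    (a : ℕ → ℝ)
    (hf : ∀ x ∈ Set.Icc α (1 : ℝ),
      |1 - ∑ k ∈ Finset.Icc 1 m, a k * x ^ k| ≤ γ ^ m)
    (Θ : ℕ → ℝ) (hΘ : ∀ k, Θ k = ∑ i, (β * σ i) ^ k)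
    (cc : ℕ) (hcc : cc = Fintype.card {i : Fin N // σ i = 0})
    (Ecc : ℝ) (hE : Ecc = N - ∑ k ∈ Finset.Icc 1 m, a k / β ^ k * Θ k) :
    |(cc : ℝ) - Ecc| ≤ ((N : ℝ) - cc) * γ ^ m := by
  simp only [hE, hΘ, sum_div_pow_mul_sum_mul_pow _ a hβ.ne', hcc]
  simpa only [Fintype.card_fin] using
    abs_card_zero_sub_le σ (f := fun x => ∑ k ∈ Icc 1 m, a k * x ^ k)
      (sum_Icc_one_mul_zero_pow m a) fun i hi => hf _ (hσ i hi)

/-- Bias bound for the estimator `ĉc = N − Σ_k (a_k/β^k) Θ̂_k`: if `E[Θ̂_k] = ‖L‖_k^k`,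
the polynomial `f(x) = Σ_{k=1}^m a_k x^k` satisfies `|1 − f(x)| ≤ γ^m` on `[α,1]` with
`γ = (1−α)/(1+α)`, all nonzero eigenvalues of `L/β` lie in `[α,1]`, and `cc(G)` is the
number of zero eigenvalues, then `|cc(G) − E[ĉc]| ≤ (N − cc(G)) γ^m`. -/
theorem bias_bound (N m : ℕ) (α β γ : ℝ) (hα0 : 0 < α) (hα1 : α < 1) (hβ : 0 < β)
    (hγ : γ = (1 - α) / (1 + α))
    (σ : Fin N → ℝ) (hσ : ∀ i, σ i ≠ 0 → σ i ∈ Set.Icc α 1)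
    (a : ℕ → ℝ)
    (hf : ∀ x ∈ Set.Icc α (1 : ℝ),
      |1 - ∑ k ∈ Finset.Icc 1 m, a k * x ^ k| ≤ γ ^ m)
    (Θ : ℕ → ℝ) (hΘ : ∀ k, Θ k = ∑ i, (β * σ i) ^ k)
    (cc : ℕ) (hcc : cc = Fintype.card {i : Fin N // σ i = 0})
    (Ecc : ℝ) (hE : Ecc = N - ∑ k ∈ Finset.Icc 1 m, a k / β ^ k * Θ k) :
    |(cc : ℝ) - Ecc| ≤ ((N : ℝ) - cc) * γ ^ m :=
  bias_bound_general N m α β γ hβ σ hσ a hf Θ hΘ cc hcc Ecc hE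
end
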